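/- arXiv:1901.03734 — 2 statements merged into one kernel-verified Lean document; each statement's English description precedes it below -/
import Mathlib

section
/- For each natural number p, the almost Riordan array A_r^p = (1 + prx/(1-px); 1/(1-px)^2, x/(1-px)) is a pseudo-involution: the first-column correction a* of its inverse equals 1 - prx/(1+px). -/
open PowerSeries

/-- Composition f ∘ g of formal power series (intended for g with zero constant term). -/
noncomputable def comp (f g : ℚ⟦X⟧) : ℚ⟦X⟧ :=
  PowerSeries.mk fun n => ∑ k ∈ Finset.range (n + 1),
    PowerSeries.coeff k f * PowerSeries.coeff n (g ^ k)

/-- (f(x) - f(0))/x. -/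
noncomputable def shift (f : ℚ⟦X⟧) : ℚ⟦X⟧ := PowerSeries.mk fun n => PowerSeries.coeff (n + 1) f

/-- Action of the almost Riordan array (a; g, f) on a power series b. -/
noncomputable def aact (a g f b : ℚ⟦X⟧) : ℚ⟦X⟧ :=
  PowerSeries.C (PowerSeries.constantCoeff b) * a + PowerSeries.X * g * comp (shift b) f

/-- Product in the group of almost Riordan arrays of order 1 (triples (a; g, f)). -/
noncomputable def amul (M N : ℚ⟦X⟧ × ℚ⟦X⟧ × ℚ⟦X⟧) : ℚ⟦X⟧ × ℚ⟦X⟧ × ℚ⟦X⟧ :=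
  (aact M.1 M.2.1 M.2.2 N.1, M.2.1 * comp N.2.1 M.2.2, comp N.2.2 M.2.2)

/-- Product in the Riordan group (pairs (g, f)). -/
noncomputable def rmul (M N : ℚ⟦X⟧ × ℚ⟦X⟧) : ℚ⟦X⟧ × ℚ⟦X⟧ :=
  (M.1 * comp N.1 M.2, comp N.2 M.2)

/-! For `f` with zero constant term, `comp · f` is Mathlib's substitution `PowerSeries.subst f`,
hence a ring homomorphism, and it commutes with inverses. Under `f̄ = x/(1+px)` the series `1 - px`
becomes `1/(1+px)`, so `g ∘ f̄ = (1+px)^2` and the tail `pr/(1-px)` of `a` becomes `pr(1+px)`.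
Therefore `a* = 1 - x (1+px)^(-2) · pr(1+px) = 1 - prx/(1+px)`. -/

lemma coeff_comp (h f : ℚ⟦X⟧) (n : ℕ) :
    coeff n (comp h f) = ∑ k ∈ Finset.range (n + 1), coeff k h * coeff n (f ^ k) :=
  coeff_mk _ _

lemma constantCoeff_comp (h f : ℚ⟦X⟧) : constantCoeff (comp h f) = constantCoeff h := by
  rw [← coeff_zero_eq_constantCoeff_apply, coeff_comp]
  simp

lemma comp_eq_subst {f : ℚ⟦X⟧} (hf : constantCoeff f = 0) (h : ℚ⟦X⟧) :
    comp h f = h.subst f := by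
  ext n
  rw [coeff_comp, coeff_subst' (HasSubst.of_constantCoeff_zero' hf),
    finsum_eq_sum_of_support_subset _ (s := Finset.range (n + 1))]
  · simp only [smul_eq_mul]
  · intro k hk
    by_contra hkn
    have hnk : n < k := by simpa using hkn
    rw [Function.mem_support, smul_eq_mul, coeff_of_lt_order _ ((Nat.cast_lt.mpr hnk).trans_le
      (le_order_pow_of_constantCoeff_eq_zero k hf)), mul_zero] at hk
    exact hk rfl

lemma comp_X {f : ℚ⟦X⟧} (hf : constantCoeff f = 0) : comp X f = f := by
  rw [comp_eq_subst hf, subst_X (HasSubst.of_constantCoeff_zero' hf)]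

lemma comp_C {f : ℚ⟦X⟧} (hf : constantCoeff f = 0) (q : ℚ) : comp (C q) f = C q := by
  rw [comp_eq_subst hf, subst_C]; rfl

lemma comp_one {f : ℚ⟦X⟧} (hf : constantCoeff f = 0) : comp 1 f = 1 := by
  simpa using comp_C hf 1

lemma comp_sub {f : ℚ⟦X⟧} (hf : constantCoeff f = 0) (h k : ℚ⟦X⟧) :
    comp (h - k) f = comp h f - comp k f := by
  simp only [comp_eq_subst hf, subst_sub (HasSubst.of_constantCoeff_zero' hf)]

lemma comp_mul {f : ℚ⟦X⟧} (hf : constantCoeff f = 0) (h k : ℚ⟦X⟧) :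
    comp (h * k) f = comp h f * comp k f := by
  simp only [comp_eq_subst hf, subst_mul (HasSubst.of_constantCoeff_zero' hf)]

lemma comp_pow {f : ℚ⟦X⟧} (hf : constantCoeff f = 0) (h : ℚ⟦X⟧) (n : ℕ) :
    comp (h ^ n) f = comp h f ^ n := by
  simp only [comp_eq_subst hf, subst_pow (HasSubst.of_constantCoeff_zero' hf)]

lemma comp_inv {f : ℚ⟦X⟧} (hf : constantCoeff f = 0) {h : ℚ⟦X⟧} (h0 : constantCoeff h ≠ 0) :
    comp h⁻¹ f = (comp h f)⁻¹ := by
  rw [eq_inv_iff_mul_eq_one (by rwa [constantCoeff_comp]), ← comp_mul hf,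
    PowerSeries.inv_mul_cancel h h0, comp_one hf]

lemma aact_one_add_X_mul (a g f h : ℚ⟦X⟧) :
    aact a g f (1 + X * h) = a + X * g * comp h f := by
  have : shift (1 + X * h) = h := by ext n; simp [shift, coeff_one]
  simp [aact, this]

lemma comp_inv_one_sub_C_mul_X (c : ℚ) :
    comp (1 - C c * X)⁻¹ (X * (1 + C c * X)⁻¹) = 1 + C c * X := by
  have hf : constantCoeff (X * (1 + C c * X)⁻¹ : ℚ⟦X⟧) = 0 := by simp
  have hw : constantCoeff (1 + C c * X : ℚ⟦X⟧) ≠ 0 := by simp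
  rw [comp_inv hf (by simp), comp_sub hf, comp_mul hf, comp_one hf, comp_C hf,
    comp_X hf, inv_eq_iff_mul_eq_one (by simp)]
  linear_combination (-(C c * X)) * PowerSeries.mul_inv_cancel _ hw

/-- A_r^p = (1 + prx/(1-px); 1/(1-px)^2, x/(1-px)) is a pseudo-involution: the first-column
correction a* = (1; -1/(g∘f̄), f̄)·a of its inverse equals 1 - prx/(1+px), where f̄ = x/(1+px). -/
theorem Ar_pow_pseudo_involution (r : ℚ) (p : ℕ) :
    aact 1
        (-(comp ((1 - PowerSeries.C (p : ℚ) * X : ℚ⟦X⟧)⁻¹ ^ 2)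
            (X * (1 + PowerSeries.C (p : ℚ) * X)⁻¹))⁻¹)
        (X * (1 + PowerSeries.C (p : ℚ) * X)⁻¹)
        (1 + PowerSeries.C ((p : ℚ) * r) * X * (1 - PowerSeries.C (p : ℚ) * X)⁻¹)
      = 1 - PowerSeries.C ((p : ℚ) * r) * X * (1 + PowerSeries.C (p : ℚ) * X)⁻¹ := by
  set w : ℚ⟦X⟧ := 1 + C (p : ℚ) * X
  have hf : constantCoeff (X * w⁻¹) = 0 := by simp
  have hw : constantCoeff w ≠ 0 := by simp [w]
  rw [show 1 + C ((p : ℚ) * r) * X * (1 - C (p : ℚ) * X)⁻¹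
      = 1 + X * (C ((p : ℚ) * r) * (1 - C (p : ℚ) * X)⁻¹) by ring,
    aact_one_add_X_mul, comp_mul hf, comp_pow hf, comp_C hf, comp_inv_one_sub_C_mul_X,
    pow_two, PowerSeries.mul_inv_rev]
  linear_combination (-(C ((p : ℚ) * r) * X * w⁻¹)) * PowerSeries.inv_mul_cancel w hw
end

section
/- Let f(x) = -x/(1+x). Then f(f(x)) = x, and the Riordan array ((1+2x)/((1+x)^4(1-x)), -x/(1+x)) is an involution in the Riordan group; moreover its first function equals (f(x)/x)·f'(x)·(f(x)-1)/(x-1). -/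
open PowerSeries

/-!
Substituting a series `g` with `constantCoeff g = 0` is a ring homomorphism (`comp` agrees with
`PowerSeries.subst`), and so is the embedding of `ℚ⟦X⟧` into the field `ℚ⸨X⸩` of Laurent series;
a ring homomorphism into a field sends `a⁻¹` to `(φ a)⁻¹` whenever `a` is a unit. Hence every
claimed identity becomes an identity of rational functions in `x` and `m(x) = -x/(1+x)`:
`m(m(x)) = x`; `s(x)·s(m(x)) = 1` for `s(x) = (1+2x)/((1+x)⁴(1-x))`, because
`1 + m = 1/(1+x)`, `1 - m = (1+2x)/(1+x)` and `1 + 2m = (1-x)/(1+x)`; and `m' = -1/(1+x)²`.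
-/

section RationalFunctions

variable {K : Type*} [Field K]

def mobius (y : K) : K := -(y / (1 + y))

def schroederLike (y : K) : K := (1 + 2 * y) / ((1 + y) ^ 4 * (1 - y))

variable {y : K}

theorem mobius_mobius (h1 : 1 + y ≠ 0) : mobius (mobius y) = y := by
  unfold mobius
  field_simp
  ring

theorem schroederLike_mul_schroederLike_mobius (h1 : 1 + y ≠ 0) (h2 : 1 - y ≠ 0)
    (h3 : 1 + 2 * y ≠ 0) : schroederLike y * schroederLike (mobius y) = 1 := by
  have one_add : 1 + mobius y = 1 / (1 + y) := by unfold mobius; field_simp; ring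
  have one_sub : 1 - mobius y = (1 + 2 * y) / (1 + y) := by unfold mobius; field_simp; ring
  have one_add_two_mul : 1 + 2 * mobius y = (1 - y) / (1 + y) := by
    unfold mobius; field_simp; ring
  rw [schroederLike, schroederLike, one_add, one_sub, one_add_two_mul]
  field_simp

theorem schroederLike_mul_mul_sub_one (h1 : 1 + y ≠ 0) (h2 : 1 - y ≠ 0) :
    schroederLike y * y * (y - 1) = mobius y * -(1 + y)⁻¹ ^ 2 * (mobius y - 1) := by
  unfold schroederLike mobius
  field_simp
  ring

end RationalFunctions

theorem comp_eq_subst_s15 {g : ℚ⟦X⟧} (hg : constantCoeff g = 0) (a : ℚ⟦X⟧) :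
    comp a g = subst g a := by
  ext n
  rw [comp, coeff_mk, coeff_subst' (HasSubst.of_constantCoeff_zero' hg),
    finsum_eq_sum_of_support_subset _ (s := Finset.range (n + 1))]
  · rfl
  intro d hd
  by_contra hdn
  simp only [Finset.coe_range, Set.mem_Iio, not_lt] at hdn
  refine hd ?_
  dsimp only
  rw [smul_eq_mul, X_pow_dvd_iff.mp (pow_dvd_pow_of_dvd (X_dvd_iff.mpr hg) d) n (by omega),
    mul_zero]

namespace PowerSeries

variable {k K : Type*} [Field k] [Field K]

theorem map_inv_of_constantCoeff_ne_zero (φ : k⟦X⟧ →+* K) {a : k⟦X⟧}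
    (ha : constantCoeff a ≠ 0) : φ a⁻¹ = (φ a)⁻¹ :=
  eq_inv_of_mul_eq_one_left (by rw [← map_mul, PowerSeries.inv_mul_cancel a ha, map_one])

theorem map_ne_zero_of_constantCoeff_ne_zero (φ : k⟦X⟧ →+* K) {a : k⟦X⟧}
    (ha : constantCoeff a ≠ 0) : φ a ≠ 0 :=
  ((isUnit_iff_constantCoeff.mpr (Ne.isUnit ha)).map φ).ne_zero

theorem map_neg_X_mul_inv_one_add_X (φ : k⟦X⟧ →+* K) :
    φ (-(X * (1 + X)⁻¹)) = mobius (φ X) := by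
  simp (disch := simp) only [map_inv_of_constantCoeff_ne_zero, map_neg, map_mul, map_add,
    map_one, mobius, div_eq_mul_inv]

theorem map_schroederLike (φ : k⟦X⟧ →+* K) :
    φ ((1 + 2 * X) * ((1 + X) ^ 4 * (1 - X))⁻¹) = schroederLike (φ X) := by
  simp (disch := simp) only [map_inv_of_constantCoeff_ne_zero, map_mul, map_add, map_one,
    map_pow, map_sub, map_ofNat, schroederLike, div_eq_mul_inv]

theorem derivative_neg_X_mul_inv_one_add_X :
    d⁄dX k (-(X * (1 + X)⁻¹)) = -(1 + X)⁻¹ ^ 2 := by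
  have hu : (1 + X) * (1 + X : k⟦X⟧)⁻¹ = 1 := PowerSeries.mul_inv_cancel _ (by simp)
  simp only [map_neg, Derivation.leibniz, derivative_inv', map_add, derivative_X,
    Derivation.map_one_eq_zero, smul_eq_mul]
  linear_combination (1 + X : k⟦X⟧)⁻¹ * hu

end PowerSeries

local notation "ι" => HahnSeries.ofPowerSeries ℤ ℚ

noncomputable def compLaurent {g : ℚ⟦X⟧} (hg : constantCoeff g = 0) :
    ℚ⟦X⟧ →+* LaurentSeries ℚ :=
  (HahnSeries.ofPowerSeries ℤ ℚ).comp (substAlgHom (HasSubst.of_constantCoeff_zero' hg)).toRingHom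

theorem compLaurent_apply {g : ℚ⟦X⟧} (hg : constantCoeff g = 0) (a : ℚ⟦X⟧) :
    compLaurent hg a = ι (comp a g) := by
  rw [comp_eq_subst_s15 hg, compLaurent, RingHom.comp_apply, AlgHom.toRingHom_eq_coe,
    RingHom.coe_coe, coe_substAlgHom]

theorem compLaurent_X {g : ℚ⟦X⟧} (hg : constantCoeff g = 0) : compLaurent hg X = ι g := by
  rw [compLaurent, RingHom.comp_apply, AlgHom.toRingHom_eq_coe, RingHom.coe_coe, substAlgHom_X]

theorem ofPowerSeries_denominators_ne_zero :
    1 + ι X ≠ 0 ∧ 1 - ι X ≠ 0 ∧ 1 + 2 * ι X ≠ 0 := by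
  refine ⟨?_, ?_, ?_⟩
  · have h := map_ne_zero_of_constantCoeff_ne_zero ι (a := 1 + X) (by simp)
    rwa [map_add, map_one] at h
  · have h := map_ne_zero_of_constantCoeff_ne_zero ι (a := 1 - X) (by simp)
    rwa [map_sub, map_one] at h
  · have h := map_ne_zero_of_constantCoeff_ne_zero ι (a := 1 + 2 * X) (by simp)
    rwa [map_add, map_one, map_mul, map_ofNat] at h

/-- With f = -x/(1+x): f∘f = x, the Riordan array ((1+2x)/((1+x)^4(1-x)), f) is an
involution, and its first function equals (f/x)·f'·(f-1)/(x-1). -/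
theorem schroeder_like_involution :
    let f : ℚ⟦X⟧ := -(X * (1 + X)⁻¹)
    let g : ℚ⟦X⟧ := (1 + 2 * X) * ((1 + X) ^ 4 * (1 - X))⁻¹
    comp f f = X ∧
    rmul (g, f) (g, f) = (1, X) ∧
    g * X * (X - 1) = f * PowerSeries.derivativeFun f * (f - 1) := by
  intro f g
  have hf : constantCoeff f = 0 := by simp [f]
  obtain ⟨h1, h2, h3⟩ := ofPowerSeries_denominators_ne_zero
  have hF : ι f = mobius (ι X) := map_neg_X_mul_inv_one_add_X ι
  have hG : ι g = schroederLike (ι X) := map_schroederLike ι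
  have hcomp : comp f f = X := by
    apply HahnSeries.ofPowerSeries_injective (Γ := ℤ)
    rw [← compLaurent_apply hf, map_neg_X_mul_inv_one_add_X, compLaurent_X, hF, mobius_mobius h1]
  refine ⟨hcomp, Prod.ext ?_ hcomp, ?_⟩
  · apply HahnSeries.ofPowerSeries_injective (Γ := ℤ)
    show ι (g * comp g f) = ι 1
    rw [map_mul, hG, ← compLaurent_apply hf, map_schroederLike, compLaurent_X, hF, map_one,
      schroederLike_mul_schroederLike_mobius h1 h2 h3]
  · apply HahnSeries.ofPowerSeries_injective (Γ := ℤ)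
    show ι (g * X * (X - 1)) = ι (f * d⁄dX ℚ f * (f - 1))
    rw [derivative_neg_X_mul_inv_one_add_X]
    simp only [map_mul, map_sub, map_one, map_neg, map_pow, hF, hG]
    rw [map_inv_of_constantCoeff_ne_zero _ (by simp), map_add, map_one]
    exact schroederLike_mul_mul_sub_one h1 h2
end
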